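/- An optimal contract is attained at a critical value or at zero: there exists α* ∈ C_{f,c} ∪ {0} such that (1 − α*)·V_{f,c}(α*) ≥ (1 − α)·V_{f,c}(α) for every α ∈ [0,1]. -/

import Mathlib

/-!
The value `V = Vfc n f c` is monotone, takes finitely many values (all values of `f`), and is
upper semicontinuous, since `V α ≥ v` holds iff some `S` with `f S ≥ v` is demanded at `α`, and
each `{α | S ∈ Demand α}` is cut out by finitely many closed half-lines. Hence every level set of
`V` in `[0, 1]` contains its infimum, and that infimum is critical or `0`. Moving `α` down to the
start of its level can only raise `(1 - α) * V α`, so the best contract is found among the finitely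
many level starts.
-/

open Finset

/-- The agent's demand at contract `α`: sets maximizing `α·f(S) − c(S)`. -/
def Demand (n : ℕ) (f : Finset (Fin n) → ℝ) (c : Fin n → ℝ) (α : ℝ) :
    Set (Finset (Fin n)) :=
  {S | ∀ T : Finset (Fin n), α * f T - ∑ a ∈ T, c a ≤ α * f S - ∑ a ∈ S, c a}

/-- `V_{f,c}(α)`: the maximal value of `f` over the demand at `α`. -/
noncomputable def Vfc (n : ℕ) (f : Finset (Fin n) → ℝ) (c : Fin n → ℝ) (α : ℝ) : ℝ :=
  sSup (f '' Demand n f c α)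

/-- The critical set `C_{f,c}`. -/
def Critical (n : ℕ) (f : Finset (Fin n) → ℝ) (c : Fin n → ℝ) : Set ℝ :=
  {α | 0 < α ∧ α ≤ 1 ∧
    ∀ ε : ℝ, 0 < ε → ε ≤ α → Vfc n f c (α - ε) ≠ Vfc n f c α}

section Demand

variable {n : ℕ} (f : Finset (Fin n) → ℝ) (c : Fin n → ℝ)

theorem demand_nonempty (α : ℝ) : (Demand n f c α).Nonempty := by
  obtain ⟨S, hS⟩ := Finite.exists_max (fun S : Finset (Fin n) => α * f S - ∑ a ∈ S, c a)
  exact ⟨S, hS⟩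

theorem isClosed_setOf_mem_demand (S : Finset (Fin n)) :
    IsClosed {α | S ∈ Demand n f c α} := by
  show IsClosed {α | ∀ T, α * f T - ∑ a ∈ T, c a ≤ α * f S - ∑ a ∈ S, c a}
  rw [Set.ofPred_forall]
  exact isClosed_iInter fun T => isClosed_le (by fun_prop) (by fun_prop)

theorem exists_mem_demand_eq_Vfc (α : ℝ) : ∃ S ∈ Demand n f c α, f S = Vfc n f c α :=
  ((demand_nonempty f c α).image f).csSup_mem ((Set.toFinite _).image f)

theorem le_Vfc {α : ℝ} {S : Finset (Fin n)} (hS : S ∈ Demand n f c α) : f S ≤ Vfc n f c α :=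
  le_csSup ((Set.toFinite _).image f).bddAbove ⟨S, hS, rfl⟩

theorem Vfc_nonneg (hf : ∀ S, 0 ≤ f S) (α : ℝ) : 0 ≤ Vfc n f c α := by
  obtain ⟨S, -, hS⟩ := exists_mem_demand_eq_Vfc f c α
  exact hS ▸ hf S

theorem monotone_Vfc : Monotone (Vfc n f c) := by
  intro α β hαβ
  obtain ⟨S, hS, hSV⟩ := exists_mem_demand_eq_Vfc f c α
  obtain ⟨T, hT, hTV⟩ := exists_mem_demand_eq_Vfc f c β
  rw [← hSV, ← hTV]
  rcases hαβ.eq_or_lt with rfl | hlt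
  · exact hTV ▸ le_Vfc f c hS
  -- adding the two optimality conditions cancels the costs
  have h : (β - α) * f S ≤ (β - α) * f T := by linarith [hS T, hT S]
  exact le_of_mul_le_mul_left h (sub_pos.2 hlt)

theorem upperSemicontinuous_Vfc : UpperSemicontinuous (Vfc n f c) := by
  refine upperSemicontinuous_iff_isClosed_preimage.2 fun v => ?_
  have h : Vfc n f c ⁻¹' Set.Ici v = ⋃ S, {α | S ∈ Demand n f c α} ∩ {_α | v ≤ f S} := by
    ext α
    simp only [Set.mem_preimage, Set.mem_Ici, Set.mem_iUnion, Set.mem_inter_iff,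
      Set.mem_ofPred_eq]
    constructor
    · obtain ⟨S, hS, hSV⟩ := exists_mem_demand_eq_Vfc f c α
      exact fun hv => ⟨S, hS, hSV ▸ hv⟩
    · rintro ⟨S, hS, hv⟩
      exact hv.trans (le_Vfc f c hS)
  rw [h]
  exact isClosed_iUnion_of_finite fun S => (isClosed_setOf_mem_demand f c S).inter isClosed_const

end Demand

theorem Monotone.map_csInf_of_upperSemicontinuous {V : ℝ → ℝ} (hmono : Monotone V)
    (husc : UpperSemicontinuous V) {s : Set ℝ} (hne : s.Nonempty) (hbdd : BddBelow s) {v : ℝ}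
    (hs : ∀ β ∈ s, V β = v) : V (sInf s) = v := by
  obtain ⟨β, hβ⟩ := hne
  refine le_antisymm (hs β hβ ▸ hmono (csInf_le hbdd hβ)) ?_
  have hsub : closure s ⊆ V ⁻¹' Set.Ici v :=
    closure_minimal (fun γ hγ => (hs γ hγ).ge) (husc.isClosed_preimage v)
  exact hsub (csInf_mem_closure ⟨β, hβ⟩ hbdd)

def levelSet (n : ℕ) (f : Finset (Fin n) → ℝ) (c : Fin n → ℝ) (v : ℝ) : Set ℝ :=
  {β | β ∈ Set.Icc (0 : ℝ) 1 ∧ Vfc n f c β = v}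

noncomputable def levelStart (n : ℕ) (f : Finset (Fin n) → ℝ) (c : Fin n → ℝ) (v : ℝ) : ℝ :=
  sInf (levelSet n f c v)

section LevelStart

variable {n : ℕ} (f : Finset (Fin n) → ℝ) (c : Fin n → ℝ) {α : ℝ}

theorem bddBelow_levelSet (v : ℝ) : BddBelow (levelSet n f c v) :=
  ⟨0, fun _ hβ => hβ.1.1⟩

theorem levelStart_le (hα : α ∈ Set.Icc (0 : ℝ) 1) : levelStart n f c (Vfc n f c α) ≤ α :=
  csInf_le (bddBelow_levelSet f c _) ⟨hα, rfl⟩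

theorem levelStart_nonneg (hα : α ∈ Set.Icc (0 : ℝ) 1) : 0 ≤ levelStart n f c (Vfc n f c α) :=
  le_csInf ⟨α, hα, rfl⟩ fun _ hβ => hβ.1.1

theorem Vfc_levelStart (hα : α ∈ Set.Icc (0 : ℝ) 1) :
    Vfc n f c (levelStart n f c (Vfc n f c α)) = Vfc n f c α :=
  (monotone_Vfc f c).map_csInf_of_upperSemicontinuous (upperSemicontinuous_Vfc f c)
    (s := levelSet n f c (Vfc n f c α)) ⟨α, hα, rfl⟩
    (bddBelow_levelSet f c _) fun _ hβ => hβ.2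

theorem levelStart_mem_critical (hα : α ∈ Set.Icc (0 : ℝ) 1) :
    levelStart n f c (Vfc n f c α) ∈ Critical n f c ∪ {0} := by
  set m := levelStart n f c (Vfc n f c α)
  have hm0 : 0 ≤ m := levelStart_nonneg f c hα
  have hm1 : m ≤ 1 := (levelStart_le f c hα).trans hα.2
  rcases hm0.eq_or_lt with hm | hm
  · exact Or.inr hm.symm
  refine Or.inl ⟨hm, hm1, fun ε hε hεm hV => ?_⟩
  have hmem : m - ε ∈ levelSet n f c (Vfc n f c α) :=
    ⟨⟨by linarith, by linarith⟩, hV.trans (Vfc_levelStart f c hα)⟩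
  have hle : m ≤ m - ε := csInf_le (bddBelow_levelSet f c _) hmem
  linarith

theorem finite_image_Vfc_Icc : (Vfc n f c '' Set.Icc 0 1).Finite := by
  refine (Set.finite_range f).subset ?_
  rintro _ ⟨α, -, rfl⟩
  obtain ⟨S, -, hS⟩ := exists_mem_demand_eq_Vfc f c α
  exact ⟨S, hS⟩

end LevelStart

theorem optimal_contract_at_critical_general (n : ℕ) (f : Finset (Fin n) → ℝ) (c : Fin n → ℝ)
    (hf01 : ∀ S : Finset (Fin n), 0 ≤ f S ∧ f S ≤ 1) :
    ∃ αstar : ℝ, αstar ∈ Critical n f c ∪ {0} ∧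
      ∀ α ∈ Set.Icc (0 : ℝ) 1,
        (1 - α) * Vfc n f c α ≤ (1 - αstar) * Vfc n f c αstar := by
  obtain ⟨_, ⟨α₀, hα₀, rfl⟩, hmax⟩ := Set.exists_max_image _
    (fun v => (1 - levelStart n f c v) * v) (finite_image_Vfc_Icc f c)
    ⟨_, 0, ⟨le_rfl, zero_le_one⟩, rfl⟩
  refine ⟨_, levelStart_mem_critical f c hα₀, fun α hα => ?_⟩
  rw [Vfc_levelStart f c hα₀]
  calc (1 - α) * Vfc n f c α
      ≤ (1 - levelStart n f c (Vfc n f c α)) * Vfc n f c α :=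
        mul_le_mul_of_nonneg_right (by linarith [levelStart_le f c hα])
          (Vfc_nonneg f c (fun S => (hf01 S).1) α)
    _ ≤ _ := hmax _ ⟨α, hα, rfl⟩

/-- An optimal contract is attained at a critical value or at zero. -/
theorem optimal_contract_at_critical (n : ℕ) (f : Finset (Fin n) → ℝ) (c : Fin n → ℝ)
    (hf0 : f ∅ = 0) (hmono : ∀ S T : Finset (Fin n), S ⊆ T → f S ≤ f T)
    (hf01 : ∀ S : Finset (Fin n), 0 ≤ f S ∧ f S ≤ 1) (hc : ∀ a : Fin n, 0 < c a) :
    ∃ αstar : ℝ, αstar ∈ Critical n f c ∪ {0} ∧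
      ∀ α ∈ Set.Icc (0 : ℝ) 1,
        (1 - α) * Vfc n f c α ≤ (1 - αstar) * Vfc n f c αstar :=
  optimal_contract_at_critical_general n f c hf01
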